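/- Let M(λ) = M_0 + M_1λ + ⋯ + M_dλ^d ∈ F[λ]^{m×(m+n)} be a polynomial matrix of degree at most d. If M(λ) has full-Sylvester-rank, then M(λ) is a minimal basis with rank(M_d) = m, i.e., with all its row degrees equal to d. -/

import Mathlib

/-!
For `k = d m + 1` full Sylvester rank means that `S_k` has full row rank `(k + d) m`.
Surjectivity of `S_k` solves `M v = e_a` by polynomial vectors `v` of degree `< k`, which gives
a polynomial right inverse `B` of `M`; independence of the rows of `S_k`, whose last block row
is `(0, …, 0, M_d)`, shows that `M_d` has full row rank. Thanks to `B`, every polynomial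
vector in the rational row space of `M` is a polynomial combination `c M`, and the full rank
of `M_d` forces `deg (c M) ≥ d` for `c ≠ 0`. Hence each row of any polynomial basis of that
space has degree at least `d`, the common row degree of `M`.
-/

open Polynomial Matrix

noncomputable section

variable {F : Type*} [Field F]

/-- The rows of a polynomial matrix, viewed as vectors of rational functions. -/
def ratRow {p q : ℕ} (M : Matrix (Fin p) (Fin q) F[X]) (i : Fin p) :
    Fin q → RatFunc F :=
  fun j => algebraMap F[X] (RatFunc F) (M i j)

/-- The rational vector subspace spanned by the rows of a polynomial matrix. -/
def rowSpan {p q : ℕ} (M : Matrix (Fin p) (Fin q) F[X]) :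
    Submodule (RatFunc F) (Fin q → RatFunc F) :=
  Submodule.span (RatFunc F) (Set.range (ratRow M))

/-- The degree of the `i`-th row of a polynomial matrix. -/
def rowDeg {p q : ℕ} (M : Matrix (Fin p) (Fin q) F[X]) (i : Fin p) : ℕ :=
  Finset.univ.sup fun j => (M i j).natDegree

/-- The rows of `M` form a polynomial basis of the rational subspace `V` whose sum of
row degrees is minimal among all polynomial bases of `V`. -/
def IsMinimalBasisOf {p q : ℕ} (V : Submodule (RatFunc F) (Fin q → RatFunc F))
    (M : Matrix (Fin p) (Fin q) F[X]) : Prop :=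
  LinearIndependent (RatFunc F) (ratRow M) ∧ rowSpan M = V ∧
    ∀ M' : Matrix (Fin p) (Fin q) F[X],
      LinearIndependent (RatFunc F) (ratRow M') → rowSpan M' = V →
        ∑ i, rowDeg M i ≤ ∑ i, rowDeg M' i

/-- A polynomial matrix is a minimal basis if its rows form a minimal basis of the
rational subspace they span. -/
def IsMinimalBasis {p q : ℕ} (M : Matrix (Fin p) (Fin q) F[X]) : Prop :=
  IsMinimalBasisOf (rowSpan M) M

/-- A polynomial matrix viewed as a matrix of rational functions. -/
def ratMat {p q : ℕ} (M : Matrix (Fin p) (Fin q) F[X]) :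
    Matrix (Fin p) (Fin q) (RatFunc F) :=
  M.map (algebraMap F[X] (RatFunc F))

/-- The right null-space over `F(λ)` of a polynomial matrix. -/
def rightNullSpace {p q : ℕ} (M : Matrix (Fin p) (Fin q) F[X]) :
    Submodule (RatFunc F) (Fin q → RatFunc F) :=
  LinearMap.ker (Matrix.mulVecLin (ratMat M))

/-- The `k`-th Sylvester matrix of a polynomial matrix regarded as having degree at
most `e`: the block-Toeplitz matrix with `k` block columns whose `j`-th block column
carries the coefficients `M_0, …, M_e` in block rows `j, …, j+e` and zeros elsewhere. -/
def sylv {p q : ℕ} (e k : ℕ) (M : Matrix (Fin p) (Fin q) F[X]) :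
    Matrix (Fin (k + e) × Fin p) (Fin k × Fin q) F :=
  fun r c =>
    if (c.1 : ℕ) ≤ (r.1 : ℕ) ∧ (r.1 : ℕ) ≤ (c.1 : ℕ) + e then
      (M r.2 c.2).coeff ((r.1 : ℕ) - (c.1 : ℕ))
    else 0

/-- `M`, regarded as a polynomial matrix of degree at most `e`, has
full-Sylvester-rank if every Sylvester matrix `S_k`, `k ≥ 1`, has full rank. -/
def HasFullSylvesterRank {p q : ℕ} (e : ℕ) (M : Matrix (Fin p) (Fin q) F[X]) : Prop :=
  ∀ k : ℕ, 1 ≤ k → (sylv e k M).rank = min ((k + e) * p) (k * q)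

/-- The `k`-th coefficient matrix of a polynomial matrix. -/
def coeffMat {p q : ℕ} (k : ℕ) (M : Matrix (Fin p) (Fin q) F[X]) :
    Matrix (Fin p) (Fin q) F :=
  fun i j => (M i j).coeff k

/-- The highest-row-degree coefficient matrix: its `i`-th row is the coefficient of
`λ^{d_i}` in the `i`-th row of `M`, where `d_i` is the `i`-th row degree. -/
def highRowMat {p q : ℕ} (M : Matrix (Fin p) (Fin q) F[X]) :
    Matrix (Fin p) (Fin q) F :=
  fun i j => (M i j).coeff (rowDeg M i)

/-- The `e`-reversal of a polynomial matrix: `rev_e P(λ) = λ^e P(1/λ)`. -/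
def revMat {p q : ℕ} (e : ℕ) (P : Matrix (Fin p) (Fin q) F[X]) :
    Matrix (Fin p) (Fin q) F[X] :=
  fun i j => (P i j).reflect e



section Sylvester

variable {p q e k : ℕ}

lemma mulVec_surjective_of_rank_eq_card {ι κ : Type*} [Fintype ι] [Fintype κ]
    {A : Matrix ι κ F} (h : A.rank = Fintype.card ι) : Function.Surjective A.mulVec := by
  rw [← coe_mulVecLin, ← LinearMap.range_eq_top]
  apply Submodule.eq_top_of_finrank_eq
  rw [← Matrix.rank, h, Module.finrank_fintype_fun_eq_card]

lemma linearIndependent_row_of_rank_eq_card {ι κ : Type*} [Fintype ι] [Fintype κ]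
    {A : Matrix ι κ F} (h : A.rank = Fintype.card ι) : LinearIndependent F A.row := by
  rw [linearIndependent_iff_card_eq_finrank_span, Set.finrank, ← rank_eq_finrank_span_row, h]

/-- In these coordinates on polynomial vectors of degree `< k`, `sylv e k M` is the matrix of
`v ↦ M *ᵥ v`. -/
def vecOfCoeffs (x : Fin k × Fin q → F) : Fin q → F[X] :=
  fun b => ∑ j : Fin k, C (x (j, b)) * X ^ (j : ℕ)

lemma coeff_mulVec_vecOfCoeffs {M : Matrix (Fin p) (Fin q) F[X]}
    (hdeg : ∀ i j, (M i j).natDegree ≤ e) (x : Fin k × Fin q → F) (i : Fin p) (r : ℕ) :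
    ((M *ᵥ vecOfCoeffs x) i).coeff r =
      ∑ c : Fin k × Fin q,
        (if (c.1 : ℕ) ≤ r ∧ r ≤ c.1 + e then (M i c.2).coeff (r - c.1) else 0) * x c := by
  simp only [mulVec, dotProduct, vecOfCoeffs, Finset.mul_sum, finsetSum_coeff,
    Fintype.sum_prod_type]
  rw [Finset.sum_comm]
  refine Finset.sum_congr rfl fun j _ => Finset.sum_congr rfl fun b _ => ?_
  rw [← mul_assoc, coeff_mul_X_pow', coeff_mul_C]
  by_cases hjr : (j : ℕ) ≤ r
  · by_cases hre : r ≤ j + e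
    · simp [hjr, hre]
    · rw [coeff_eq_zero_of_natDegree_lt ((hdeg i b).trans_lt (by omega))]
      simp [hre]
  · simp [hjr]

lemma exists_mulVec_eq_of_surjective_sylv {M : Matrix (Fin p) (Fin q) F[X]}
    (hdeg : ∀ i j, (M i j).natDegree ≤ e) (hS : Function.Surjective (sylv e k M).mulVec)
    (y : Fin p → F[X]) (hy : ∀ i, (y i).degree < ↑(k + e)) : ∃ v, M *ᵥ v = y := by
  obtain ⟨x, hx⟩ := hS fun r => (y r.2).coeff r.1
  refine ⟨vecOfCoeffs x, funext fun i => Polynomial.ext fun r => ?_⟩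
  rw [coeff_mulVec_vecOfCoeffs hdeg]
  by_cases hr : r < k + e
  · exact congrFun hx (⟨r, hr⟩, i)
  · rw [coeff_eq_zero_of_degree_lt ((hy i).trans_le (by exact_mod_cast not_lt.mp hr))]
    refine Finset.sum_eq_zero fun c _ => ?_
    rw [if_neg (by omega), zero_mul]

lemma exists_mul_eq_one_of_surjective_sylv {M : Matrix (Fin p) (Fin q) F[X]}
    (hdeg : ∀ i j, (M i j).natDegree ≤ e) (hk : 1 ≤ k)
    (hS : Function.Surjective (sylv e k M).mulVec) :
    ∃ B : Matrix (Fin q) (Fin p) F[X], M * B = 1 := by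
  have hy (a i : Fin p) : ((Pi.single a 1 : Fin p → F[X]) i).degree < ↑(k + e) := by
    have hpos : (0 : WithBot ℕ) < ↑(k + e) := by exact_mod_cast (by omega : 0 < k + e)
    rcases eq_or_ne i a with rfl | h
    · simpa using hpos
    · simp [h]
  choose v hv using fun a => exists_mulVec_eq_of_surjective_sylv hdeg hS _ (hy a)
  refine ⟨(of v)ᵀ, ext fun i a => ?_⟩
  rw [one_eq_pi_single, Pi.single_comm, ← hv a]
  rfl

lemma lastBlockRow_vecMul_sylv (M : Matrix (Fin p) (Fin q) F[X]) (hk : 1 ≤ k)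
    (u : Fin p → F) :
    (fun r : Fin (k + e) × Fin p => if (r.1 : ℕ) = k + e - 1 then u r.2 else 0) ᵥ* sylv e k M =
      fun c => if (c.1 : ℕ) = k - 1 then (u ᵥ* coeffMat e M) c.2 else 0 := by
  funext c
  have hlast : k + e - 1 < k + e := by omega
  simp only [vecMul, dotProduct, Fintype.sum_prod_type, ite_mul, zero_mul]
  rw [Finset.sum_eq_single (⟨k + e - 1, hlast⟩ : Fin (k + e)) (fun r _ hr => Finset.sum_eq_zero
    fun i _ => if_neg fun h => hr (Fin.ext h)) (by simp)]
  simp only [if_true, sylv, coeffMat]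
  by_cases hc : (c.1 : ℕ) = k - 1
  · have hc' : (c.1 : ℕ) ≤ k + e - 1 ∧ k + e - 1 ≤ c.1 + e := by omega
    have he : k + e - 1 - c.1 = e := by omega
    rw [if_pos hc]
    exact Finset.sum_congr rfl fun i _ => by rw [if_pos hc', he]
  · have hc' : ¬((c.1 : ℕ) ≤ k + e - 1 ∧ k + e - 1 ≤ c.1 + e) := by omega
    simp only [hc', hc, if_false, mul_zero, Finset.sum_const_zero]

lemma linearIndependent_coeffMat_of_linearIndependent_sylv {M : Matrix (Fin p) (Fin q) F[X]}
    (hk : 1 ≤ k) (hS : LinearIndependent F (sylv e k M).row) :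
    LinearIndependent F (coeffMat e M).row := by
  rw [← vecMul_injective_iff] at hS ⊢
  intro u w huw
  have hlast := @hS (fun r => if (r.1 : ℕ) = k + e - 1 then u r.2 else 0)
    (fun r => if (r.1 : ℕ) = k + e - 1 then w r.2 else 0) (by
      dsimp only at huw ⊢
      rw [lastBlockRow_vecMul_sylv M hk, lastBlockRow_vecMul_sylv M hk, huw])
  funext i
  simpa using congrFun hlast (⟨k + e - 1, by omega⟩, i)

lemma HasFullSylvesterRank.rank_sylv {M : Matrix (Fin p) (Fin q) F[X]}
    (h : HasFullSylvesterRank e M) (hpq : p < q) :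
    (sylv e (e * p + 1) M).rank = Fintype.card (Fin (e * p + 1 + e) × Fin p) := by
  rw [h _ le_add_self, Fintype.card_prod, Fintype.card_fin, Fintype.card_fin, min_eq_left]
  have := Nat.mul_le_mul_left (e * p + 1) hpq
  nlinarith

end Sylvester

section RowSpan

variable {p q r e : ℕ}

lemma natDegree_le_rowDeg (M : Matrix (Fin p) (Fin q) F[X]) (i : Fin p) (j : Fin q) :
    (M i j).natDegree ≤ rowDeg M i :=
  Finset.le_sup (f := fun j => (M i j).natDegree) (Finset.mem_univ j)

lemma rowDeg_eq_of_linearIndependent_coeffMat {M : Matrix (Fin p) (Fin q) F[X]}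
    (hdeg : ∀ i j, (M i j).natDegree ≤ e) (hlead : LinearIndependent F (coeffMat e M).row)
    (i : Fin p) : rowDeg M i = e := by
  refine le_antisymm (Finset.sup_le fun j _ => hdeg i j) ?_
  obtain ⟨j, hj⟩ := Function.ne_iff.mp (hlead.ne_zero i)
  exact (le_natDegree_of_ne_zero hj).trans (natDegree_le_rowDeg M i j)

/-- The predictable-degree property, in the weak form `deg (c M) ≥ e` for `c ≠ 0`. -/
lemma exists_le_natDegree_vecMul {M : Matrix (Fin p) (Fin q) F[X]}
    (hdeg : ∀ i j, (M i j).natDegree ≤ e) (hlead : LinearIndependent F (coeffMat e M).row)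
    {c : Fin p → F[X]} (hc : c ≠ 0) : ∃ b, e ≤ ((c ᵥ* M) b).natDegree := by
  obtain ⟨i₁, hi₁⟩ := Function.ne_iff.mp hc
  obtain ⟨i₀, -, hmax⟩ :=
    Finset.univ.exists_max_image (fun i => (c i).degree) ⟨i₁, Finset.mem_univ _⟩
  have hc₀ : c i₀ ≠ 0 := fun h =>
    hi₁ (degree_eq_bot.mp (le_bot_iff.mp (by simpa [h] using hmax i₁ (Finset.mem_univ _))))
  set t := (c i₀).natDegree
  have hle (i : Fin p) : (c i).natDegree ≤ t :=
    natDegree_le_natDegree (hmax i (Finset.mem_univ _))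
  have hu : (fun i => (c i).coeff t) ≠ 0 :=
    Function.ne_iff.mpr ⟨i₀, leadingCoeff_ne_zero.mpr hc₀⟩
  obtain ⟨b, hb⟩ := Function.ne_iff.mp
    (zero_vecMul (coeffMat e M) ▸ (vecMul_injective_iff.mpr hlead).ne hu)
  have hcoeff : ((c ᵥ* M) b).coeff (t + e) = ((fun i => (c i).coeff t) ᵥ* coeffMat e M) b := by
    simp only [vecMul, dotProduct, finsetSum_coeff, coeffMat]
    exact Finset.sum_congr rfl fun i _ => coeff_mul_add_eq_of_natDegree_le (hle i) (hdeg i b)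
  exact ⟨b, le_add_self.trans (le_natDegree_of_ne_zero (hcoeff ▸ hb))⟩

lemma algebraMap_comp_vecMul (v : Fin p → F[X]) (M : Matrix (Fin p) (Fin q) F[X]) :
    algebraMap F[X] (RatFunc F) ∘ (v ᵥ* M) = (algebraMap F[X] (RatFunc F) ∘ v) ᵥ* ratMat M :=
  funext (RingHom.map_vecMul _ M v)

lemma ratMat_mul_eq_one {M : Matrix (Fin p) (Fin q) F[X]} {B : Matrix (Fin q) (Fin p) F[X]}
    (hB : M * B = 1) : ratMat M * ratMat B = 1 := by
  rw [ratMat, ratMat, ← Matrix.map_mul, hB]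
  exact Matrix.map_one _ (map_zero _) (map_one _)

lemma mem_rowSpan_iff {M : Matrix (Fin p) (Fin q) F[X]} {x : Fin q → RatFunc F} :
    x ∈ rowSpan M ↔ ∃ u, u ᵥ* ratMat M = x := by
  rw [rowSpan, show ratRow M = (ratMat M).row from rfl, ← range_vecMulLinear]
  rfl

lemma linearIndependent_ratRow_of_mul_eq_one {M : Matrix (Fin p) (Fin q) F[X]}
    {B : Matrix (Fin q) (Fin p) F[X]} (hB : M * B = 1) :
    LinearIndependent (RatFunc F) (ratRow M) :=
  (vecMul_injective_iff (M := ratMat M)).mp fun u w h => by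
    simpa only [vecMul_vecMul, ratMat_mul_eq_one hB, vecMul_one] using congrArg (· ᵥ* ratMat B) h

lemma exists_vecMul_eq_of_mem_rowSpan {M : Matrix (Fin p) (Fin q) F[X]}
    {B : Matrix (Fin q) (Fin p) F[X]} (hB : M * B = 1) {w : Fin q → F[X]}
    (hw : algebraMap F[X] (RatFunc F) ∘ w ∈ rowSpan M) : ∃ c, c ᵥ* M = w := by
  obtain ⟨u, hu⟩ := mem_rowSpan_iff.mp hw
  refine ⟨w ᵥ* B, (IsFractionRing.injective F[X] (RatFunc F)).comp_left ?_⟩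
  dsimp only
  rw [algebraMap_comp_vecMul, algebraMap_comp_vecMul, ← hu, vecMul_vecMul, vecMul_vecMul,
    ← Matrix.mul_assoc, ratMat_mul_eq_one hB, Matrix.one_mul]

lemma le_rowDeg_of_mem_rowSpan {M : Matrix (Fin p) (Fin q) F[X]}
    {B : Matrix (Fin q) (Fin p) F[X]} (hdeg : ∀ i j, (M i j).natDegree ≤ e)
    (hlead : LinearIndependent F (coeffMat e M).row) (hB : M * B = 1)
    {M' : Matrix (Fin r) (Fin q) F[X]} {i : Fin r} (hi : ratRow M' i ≠ 0)
    (hmem : ratRow M' i ∈ rowSpan M) : e ≤ rowDeg M' i := by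
  obtain ⟨c, hc⟩ := exists_vecMul_eq_of_mem_rowSpan hB (w := M' i) hmem
  have hc₀ : c ≠ 0 := by
    rintro rfl
    exact hi (funext fun j => by simp [ratRow, ← hc])
  obtain ⟨b, hb⟩ := exists_le_natDegree_vecMul hdeg hlead hc₀
  rw [hc] at hb
  exact hb.trans (natDegree_le_rowDeg M' i b)

end RowSpan

theorem isMinimalBasis_of_hasFullSylvesterRank_general {F : Type*} [Field F] {m n d : ℕ}
    (hn : 0 < n)
    (M : Matrix (Fin m) (Fin (m + n)) F[X]) (hdeg : ∀ i j, (M i j).natDegree ≤ d)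
    (hfull : HasFullSylvesterRank d M) :
    IsMinimalBasis M ∧ (coeffMat d M).rank = m ∧ ∀ i, rowDeg M i = d := by
  have hk : 1 ≤ d * m + 1 := le_add_self
  have hrank := hfull.rank_sylv (by omega : m < m + n)
  obtain ⟨B, hB⟩ :=
    exists_mul_eq_one_of_surjective_sylv hdeg hk (mulVec_surjective_of_rank_eq_card hrank)
  have hlead := linearIndependent_coeffMat_of_linearIndependent_sylv hk
    (linearIndependent_row_of_rank_eq_card hrank)
  have hrowDeg := rowDeg_eq_of_linearIndependent_coeffMat hdeg hlead
  refine ⟨⟨linearIndependent_ratRow_of_mul_eq_one hB, rfl, fun M' hM' hspan => ?_⟩,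
    by simpa using hlead.rank_matrix, hrowDeg⟩
  simp only [hrowDeg]
  exact Finset.sum_le_sum fun i _ => le_rowDeg_of_mem_rowSpan hdeg hlead hB (hM'.ne_zero i)
    (hspan ▸ Submodule.subset_span (Set.mem_range_self i))

/-- A polynomial matrix with full-Sylvester-rank is a minimal basis whose leading
coefficient `M_d` has full row rank `m`, i.e. all of whose row degrees equal `d`. -/
theorem isMinimalBasis_of_hasFullSylvesterRank {F : Type*} [Field F] {m n d : ℕ}
    (hm : 0 < m) (hn : 0 < n) (hd : 0 < d)
    (M : Matrix (Fin m) (Fin (m + n)) F[X]) (hdeg : ∀ i j, (M i j).natDegree ≤ d)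
    (hfull : HasFullSylvesterRank d M) :
    IsMinimalBasis M ∧ (coeffMat d M).rank = m ∧ ∀ i, rowDeg M i = d :=
  isMinimalBasis_of_hasFullSylvesterRank_general hn M hdeg hfull

end
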